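/- For each integer m ≥ 0, let A_m be the least index n ≥ 0 such that S_n(√2) = m. Then A_0 = 0, A_1 = 3, and A_{n+1} = 6A_n − A_{n-1} + 2 for all n ≥ 1. -/

import Mathlib

/-- The deterministic random walk `S_n(ξ) = ∑_{j=1}^n (-1)^⌊j·ξ⌋`. -/
noncomputable def S (ξ : ℝ) (n : ℕ) : ℤ :=
  ∑ j ∈ Finset.Icc 1 n, ((Int.negOnePow ⌊(j : ℝ) * ξ⌋ : ℤˣ) : ℤ)

/-- `A m` is the least index `n ≥ 0` such that `S_n(√2) = m`. -/
noncomputable def A (m : ℕ) : ℕ :=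
  sInf {n : ℕ | S (Real.sqrt 2) n = (m : ℤ)}

/-!
Let `beatty n = ⌊n√2⌋` and `expand n = 3n + 2 beatty n`. Since `(3 + 2√2)√2 = 4 + 3√2`,
`(expand n + c)√2 = 4n + 3 beatty n + c√2 + (3 - 2√2)(n√2 - beatty n)`, and the perturbation
`3 - 2√2 ≈ 0.17` does not change `⌊c√2⌋` for `c ≤ 6`. Hence after time `expand n` the walk
repeats its first six values `0, -1, 0, 1, 0, -1, 0`, multiplied by the sign `(-1)^(beatty n)`.
Consecutive values of `expand` are `5` or `7` apart and `S_4 = S_6 = 0`, so `S_(expand n) = S_n`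
and the walk stays below `S_n + 1` in between. Therefore `A (m + 1) = expand (A m) + 3`, and
eliminating `beatty` from the two resulting linear recurrences gives the recurrence for `A`.
-/

namespace SqrtTwoWalk

noncomputable def beatty (n : ℕ) : ℕ := ⌊(n : ℝ) * √2⌋₊

noncomputable def expand (n : ℕ) : ℕ := 3 * n + 2 * beatty n

noncomputable def step (n : ℕ) : ℤ := (-1) ^ beatty n

noncomputable def hit : ℕ → ℕ
  | 0 => 0
  | m + 1 => expand (hit m) + 3

lemma sqrt_two_bounds : (7 / 5 : ℝ) < √2 ∧ √2 < 3 / 2 := by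
  have h := Real.sq_sqrt (show (0 : ℝ) ≤ 2 by norm_num)
  have h0 := Real.sqrt_nonneg 2
  constructor <;> nlinarith

lemma beatty_le (n : ℕ) : (beatty n : ℝ) ≤ n * √2 := Nat.floor_le (by positivity)

lemma lt_beatty_add_one (n : ℕ) : (n : ℝ) * √2 < beatty n + 1 := Nat.lt_floor_add_one _

@[simp] lemma beatty_zero : beatty 0 = 0 := by simp [beatty]

@[simp] lemma expand_zero : expand 0 = 0 := by simp [expand]

lemma beatty_eq_of_bounds {c d : ℕ} (h₁ : (d : ℝ) ≤ c * √2) (h₂ : (c : ℝ) * √2 < d + 1) :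
    beatty c = d :=
  (Nat.floor_eq_iff (by positivity)).2 ⟨h₁, h₂⟩

lemma beatty_one_to_six :
    beatty 1 = 1 ∧ beatty 2 = 2 ∧ beatty 3 = 4 ∧ beatty 4 = 5 ∧ beatty 5 = 7 ∧ beatty 6 = 8 := by
  obtain ⟨hl, hu⟩ := sqrt_two_bounds
  refine ⟨?_, ?_, ?_, ?_, ?_, ?_⟩ <;> apply beatty_eq_of_bounds <;> norm_num <;> linarith

lemma beatty_succ (n : ℕ) : beatty (n + 1) = beatty n + 1 ∨ beatty (n + 1) = beatty n + 2 := by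
  obtain ⟨hl, hu⟩ := sqrt_two_bounds
  have hn := beatty_le n
  have hn' := lt_beatty_add_one n
  have h₁ : beatty n + 1 ≤ beatty (n + 1) := by
    apply Nat.le_floor
    push_cast
    linarith
  have h₂ : beatty (n + 1) < beatty n + 3 := by
    apply (Nat.floor_lt (by positivity)).2
    push_cast
    linarith
  omega

lemma expand_succ (n : ℕ) : expand (n + 1) = expand n + 5 ∨ expand (n + 1) = expand n + 7 := by
  unfold expand
  rcases beatty_succ n with h | h <;> omega

lemma expand_add_mul_sqrt_two (n c : ℕ) :
    ((expand n + c : ℕ) : ℝ) * √2 =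
      c * √2 + (3 - 2 * √2) * (n * √2 - beatty n) + (4 * n + 3 * beatty n : ℕ) := by
  have h := Real.sq_sqrt (show (0 : ℝ) ≤ 2 by norm_num)
  push_cast [expand]
  linear_combination (2 * n : ℝ) * h

lemma beatty_expand_add_of_le (n c : ℕ) (h : (c : ℝ) * √2 + (3 - 2 * √2) ≤ beatty c + 1) :
    beatty (expand n + c) = 4 * n + 3 * beatty n + beatty c := by
  obtain ⟨hl, hu⟩ := sqrt_two_bounds
  have hφ₀ : 0 ≤ (n : ℝ) * √2 - beatty n := sub_nonneg.2 (beatty_le n)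
  have hφ₁ : (n : ℝ) * √2 - beatty n < 1 := by linarith [lt_beatty_add_one n]
  have hε : (0 : ℝ) < 3 - 2 * √2 := by linarith
  rw [beatty, expand_add_mul_sqrt_two, Nat.floor_add_natCast (by positivity), add_comm,
    Nat.add_left_cancel_iff, Nat.floor_eq_iff (by positivity)]
  constructor <;> nlinarith [beatty_le c]

lemma beatty_expand_add (n : ℕ) {c : ℕ} (hc : c ≤ 6) :
    beatty (expand n + c) = 4 * n + 3 * beatty n + beatty c := by
  apply beatty_expand_add_of_le
  -- tight at `c = 2`, where `2√2 + (3 - 2√2) = 3`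
  obtain ⟨b₁, b₂, b₃, b₄, b₅, b₆⟩ := beatty_one_to_six
  obtain ⟨hl, hu⟩ := sqrt_two_bounds
  interval_cases c <;> norm_num [*] <;> linarith

lemma step_expand_add (n : ℕ) {c : ℕ} (hc : c ≤ 6) :
    step (expand n + c) = step n * step c := by
  rw [step, step, step, beatty_expand_add n hc,
    show 4 * n + 3 * beatty n + beatty c = 2 * (2 * n + beatty n) + beatty n + beatty c by ring,
    pow_add, pow_add, pow_mul, neg_one_sq, one_pow, one_mul]

lemma step_expand (n : ℕ) : step (expand n) = step n := by
  simpa [step] using step_expand_add n (Nat.zero_le 6)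

lemma abs_step (n : ℕ) : |step n| = 1 := by simp [step]

lemma S_zero (ξ : ℝ) : S ξ 0 = 0 := by simp [S]

lemma S_sqrt_two_succ (n : ℕ) : S √2 (n + 1) = S √2 n + step (n + 1) := by
  rw [S, S, Finset.sum_Icc_succ_top (by omega), step, beatty,
    ← Int.natCast_floor_eq_floor (by positivity), Int.coe_negOnePow_natCast]

lemma S_sqrt_two_one_to_six :
    S √2 1 = -1 ∧ S √2 2 = 0 ∧ S √2 3 = 1 ∧ S √2 4 = 0 ∧ S √2 5 = -1 ∧ S √2 6 = 0 := by
  obtain ⟨b₁, b₂, b₃, b₄, b₅, b₆⟩ := beatty_one_to_six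
  simp [S_sqrt_two_succ, S_zero, step, b₁, b₂, b₃, b₄, b₅, b₆]

lemma abs_S_sqrt_two_le_one {c : ℕ} (hc : c ≤ 6) : |S √2 c| ≤ 1 := by
  obtain ⟨s₁, s₂, s₃, s₄, s₅, s₆⟩ := S_sqrt_two_one_to_six
  interval_cases c <;> simp [S_zero, *]

lemma S_sqrt_two_expand_add (n : ℕ) {c : ℕ} (hc : c ≤ 6) :
    S √2 (expand n + c) = S √2 (expand n) + step n * S √2 c := by
  induction c with
  | zero => simp [S_zero]
  | succ c ih =>
    rw [← add_assoc, S_sqrt_two_succ, ih (by omega), Nat.add_assoc, step_expand_add n hc,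
      S_sqrt_two_succ]
    ring

lemma S_sqrt_two_expand (n : ℕ) : S √2 (expand n) = S √2 n := by
  induction n with
  | zero => simp
  | succ n ih =>
    obtain ⟨-, -, -, s₄, -, s₆⟩ := S_sqrt_two_one_to_six
    have hblock : ∀ k ≤ 6, expand (n + 1) = expand n + k + 1 → S √2 k = 0 →
        S √2 (expand (n + 1)) = S √2 (n + 1) := by
      intro k hk hexp hS
      rw [hexp, S_sqrt_two_succ, ← hexp, step_expand, S_sqrt_two_expand_add n hk, hS, ih,
        S_sqrt_two_succ]
      ring
    rcases expand_succ n with h | h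
    exacts [hblock 4 (by norm_num) h s₄, hblock 6 (by norm_num) h s₆]

lemma S_sqrt_two_expand_add_le (n : ℕ) {c : ℕ} (hc : c ≤ 6) :
    S √2 (expand n + c) ≤ S √2 n + 1 := by
  have h : |step n * S √2 c| ≤ 1 := by
    rw [abs_mul, abs_step, one_mul]
    exact abs_S_sqrt_two_le_one hc
  rw [S_sqrt_two_expand_add n hc, S_sqrt_two_expand]
  linarith [le_abs_self (step n * S √2 c)]

lemma exists_expand_add_of_lt {N M : ℕ} (h : N < expand M) :
    ∃ n < M, ∃ c ≤ 6, N = expand n + c := by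
  induction M with
  | zero => simp at h
  | succ M ih =>
    by_cases hN : N < expand M
    · obtain ⟨n, hn, c, hc, rfl⟩ := ih hN
      exact ⟨n, by omega, c, hc, rfl⟩
    · exact ⟨M, by omega, N - expand M, by rcases expand_succ M with h' | h' <;> omega, by omega⟩

lemma step_hit (m : ℕ) : step (hit m) = 1 := by
  induction m with
  | zero => simp [hit, step]
  | succ m ih =>
    rw [hit, step_expand_add _ (by norm_num), ih, step, beatty_one_to_six.2.2.1]
    norm_num

lemma S_sqrt_two_hit (m : ℕ) : S √2 (hit m) = m := by
  induction m with
  | zero => simp [hit, S_zero]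
  | succ m ih =>
    rw [hit, S_sqrt_two_expand_add _ (by norm_num), S_sqrt_two_expand, ih, step_hit,
      S_sqrt_two_one_to_six.2.2.1]
    push_cast
    ring

lemma S_sqrt_two_lt_of_lt_hit {m N : ℕ} (h : N < hit m) : S √2 N < m := by
  induction m generalizing N with
  | zero => simp [hit] at h
  | succ m ih =>
    rw [hit] at h
    by_cases hN : N < expand (hit m)
    · obtain ⟨n, hn, c, hc, rfl⟩ := exists_expand_add_of_lt hN
      have := S_sqrt_two_expand_add_le n hc
      have := ih hn
      push_cast
      omega
    · obtain ⟨c, hc, rfl⟩ : ∃ c ≤ 2, N = expand (hit m) + c :=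
        ⟨N - expand (hit m), by omega, by omega⟩
      have hS : S √2 c ≤ 0 := by
        obtain ⟨s₁, s₂, -⟩ := S_sqrt_two_one_to_six
        interval_cases c <;> simp [S_zero, *]
      rw [S_sqrt_two_expand_add _ (by omega), S_sqrt_two_expand, S_sqrt_two_hit, step_hit]
      push_cast
      omega

lemma A_eq_hit (m : ℕ) : A m = hit m :=
  le_antisymm (Nat.sInf_le (S_sqrt_two_hit m))
    (le_csInf ⟨hit m, S_sqrt_two_hit m⟩ fun _ hN =>
      not_lt.1 fun h => (S_sqrt_two_lt_of_lt_hit h).ne hN)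

lemma hit_add_two_add_hit (m : ℕ) : hit (m + 2) + hit m = 6 * hit (m + 1) + 2 := by
  have h : beatty (hit (m + 1)) = 4 * hit m + 3 * beatty (hit m) + 4 := by
    rw [hit, beatty_expand_add _ (by norm_num), beatty_one_to_six.2.2.1]
  simp only [hit, expand] at h ⊢
  omega

end SqrtTwoWalk

open SqrtTwoWalk in
theorem stmt_5 :
    A 0 = 0 ∧ A 1 = 3 ∧
    (∀ n : ℕ, 1 ≤ n → (A (n + 1) : ℤ) = 6 * A n - A (n - 1) + 2) := by
  simp only [A_eq_hit]
  refine ⟨rfl, by simp [hit], fun n hn => ?_⟩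
  obtain ⟨m, rfl⟩ := Nat.exists_eq_add_of_le' hn
  show ((hit (m + 2) : ℕ) : ℤ) = 6 * hit (m + 1) - hit m + 2
  have := hit_add_two_add_hit m
  omega
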